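/- arXiv:2510.22578 — 5 statements merged into one kernel-verified Lean document; each statement's English description precedes it below -/
import Mathlib

section
/- Let 𝔽 ∈ {ℝ, ℂ}, let p ∈ (0,1], let n and k be positive integers with 2k ≤ n, and let x ∈ 𝔽^n. Let T ⊆ {1,…,n} be any set of 2k indices of the 2k largest-magnitude entries of x, i.e., |T| = 2k and |x_i| ≥ |x_j| whenever i ∈ T and j ∉ T. Then ‖x_{T^c}‖₂ ≤ σ_k(x)_p / k^{1/p − 1/2}. -/
open MeasureTheory ProbabilityTheory Real Finset

/-- The `ℓ_q` (quasi-)norm `(∑ i, ‖x i‖^q)^{1/q}` of a vector with entries in `𝕜 ∈ {ℝ, ℂ}`. -/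
noncomputable def lpNorm {ι : Type*} [Fintype ι] {𝕜 : Type*} [RCLike 𝕜] (q : ℝ) (x : ι → 𝕜) : ℝ :=
  (∑ i, ‖x i‖ ^ q) ^ (1 / q)

open Classical in
/-- The number of nonzero entries of a vector. -/
noncomputable def l0Norm {ι : Type*} [Fintype ι] {𝕜 : Type*} [RCLike 𝕜] (x : ι → 𝕜) : ℕ :=
  (Finset.univ.filter fun i => x i ≠ 0).card

/-- The phase distance `dist_q(x,y) = inf_{|c|=1} ‖x - c • y‖_q`. -/
noncomputable def phaseDist {ι : Type*} [Fintype ι] {𝕜 : Type*} [RCLike 𝕜] (q : ℝ)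
    (x y : ι → 𝕜) : ℝ :=
  sInf {d | ∃ c : 𝕜, ‖c‖ = 1 ∧ d = lpNorm q (fun i => x i - c * y i)}

/-- The best `k`-term approximation error `σ_k(x)_q = inf {‖x - z‖_q : ‖z‖₀ ≤ k}`. -/
noncomputable def sigmaK {ι : Type*} [Fintype ι] {𝕜 : Type*} [RCLike 𝕜] (k : ℕ) (q : ℝ)
    (x : ι → 𝕜) : ℝ :=
  sInf {d | ∃ z : ι → 𝕜, l0Norm z ≤ k ∧ d = lpNorm q (fun i => x i - z i)}

/-- The entrywise modulus `|Ax|` of the matrix-vector product `Ax`. -/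
noncomputable def absMv {m n : ℕ} {𝕜 : Type*} [RCLike 𝕜] (A : Fin m → Fin n → 𝕜)
    (x : Fin n → 𝕜) : Fin m → ℝ :=
  fun i => ‖∑ j, A i j * x j‖

/-- `A` satisfies the phaseless bi-Lipschitz condition on `X` with constants `L, U`:
`L·dist(x,y) ≤ ‖|Ax| - |Ay|‖₂ ≤ U·dist(x,y)` for all `x, y ∈ X`. -/
def PhaselessBiLip {m n : ℕ} {𝕜 : Type*} [RCLike 𝕜] (A : Fin m → Fin n → 𝕜)
    (X : Set (Fin n → 𝕜)) (L U : ℝ) : Prop :=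
  ∀ x ∈ X, ∀ y ∈ X,
    L * phaseDist 2 x y ≤ lpNorm 2 (fun i => absMv A x i - absMv A y i) ∧
    lpNorm 2 (fun i => absMv A x i - absMv A y i) ≤ U * phaseDist 2 x y

section

variable {ι : Type*} {𝕜 : Type*} [RCLike 𝕜]

lemma add_card_sdiff_le_card_sdiff [DecidableEq ι] {S T : Finset ι} {k : ℕ} (hS : S.card ≤ k)
    (hT : 2 * k ≤ T.card) : k + (S \ T).card ≤ (T \ S).card := by
  have hT' := card_sdiff_add_card_inter T S
  have hS' := card_sdiff_add_card_inter S T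
  rw [inter_comm] at hS'
  omega

lemma sum_rpow_two_le_rpow_mul_sum_rpow {s : Finset ι} {a : ι → ℝ} {p t : ℝ} (hp : p ≤ 2)
    (ha : ∀ i ∈ s, 0 ≤ a i) (hat : ∀ i ∈ s, a i ≤ t) :
    ∑ i ∈ s, a i ^ (2 : ℝ) ≤ t ^ (2 - p) * ∑ i ∈ s, a i ^ p := by
  rw [mul_sum]
  refine sum_le_sum fun i hi => ?_
  calc a i ^ (2 : ℝ) = a i ^ (2 - p) * a i ^ p := by
        rw [← rpow_add' (ha i hi) (by norm_num), sub_add_cancel]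
    _ ≤ t ^ (2 - p) * a i ^ p :=
        mul_le_mul_of_nonneg_right (rpow_le_rpow (ha i hi) (hat i hi) (by linarith))
          (rpow_nonneg (ha i hi) _)

lemma rpow_mul_rpow_half_le_add_rpow {a b p : ℝ} (ha : 0 ≤ a) (hb : 0 ≤ b) (hp0 : 0 < p)
    (hp2 : p ≤ 2) : a ^ (1 / p - 1 / 2) * b ^ (1 / 2 : ℝ) ≤ (a + b) ^ (1 / p) := by
  have he : 0 ≤ 1 / p - 1 / 2 := by
    rw [sub_nonneg]
    exact one_div_le_one_div_of_le hp0 hp2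
  calc a ^ (1 / p - 1 / 2) * b ^ (1 / 2 : ℝ)
      ≤ (a + b) ^ (1 / p - 1 / 2) * (a + b) ^ (1 / 2 : ℝ) := by
        gcongr <;> linarith
    _ = (a + b) ^ (1 / p) := by
        rw [← rpow_add' (by positivity) (by positivity), sub_add_cancel]

variable [Fintype ι]

lemma le_sigmaK {k : ℕ} {q c : ℝ} {x : ι → 𝕜}
    (h : ∀ z : ι → 𝕜, l0Norm z ≤ k → c ≤ lpNorm q (fun i => x i - z i)) :
    c ≤ sigmaK k q x :=
  le_csInf ⟨_, 0, by simp [l0Norm], rfl⟩ fun _ ⟨z, hz, hd⟩ => hd ▸ h z hz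

lemma exists_finset_card_le_of_l0Norm_le {k : ℕ} {z : ι → 𝕜} (hz : l0Norm z ≤ k) :
    ∃ S : Finset ι, S.card ≤ k ∧ ∀ i ∉ S, z i = 0 := by
  classical
  exact ⟨_, hz, fun i hi => by simpa using hi⟩

variable [DecidableEq ι]

lemma lpNorm_ite_mem_zero {q : ℝ} (hq : q ≠ 0) (T : Finset ι) (x : ι → 𝕜) :
    lpNorm q (fun i => if i ∈ T then 0 else x i) = (∑ i ∈ Tᶜ, ‖x i‖ ^ q) ^ (1 / q) := by
  unfold _root_.lpNorm
  congr 1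
  rw [← sum_add_sum_compl T, sum_eq_zero fun i hi => by simp [hi, zero_rpow hq], zero_add]
  exact sum_congr rfl fun i hi => by simp [mem_compl.1 hi]

lemma mul_add_sum_compl_le_sum {f g : ι → ℝ} {s : ℝ} {k : ℕ} {S T : Finset ι}
    (hS : S.card ≤ k) (hT : 2 * k ≤ T.card) (hs : 0 ≤ s) (hg : ∀ i, 0 ≤ g i)
    (hgf : ∀ i ∉ S, g i = f i) (hfT : ∀ i ∈ T, s ≤ f i) (hfTc : ∀ j ∉ T, f j ≤ s) :
    k * s + ∑ j ∈ Tᶜ, f j ≤ ∑ i, g i := by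
  have hcard : (k + (S \ T).card : ℝ) ≤ (T \ S).card := by
    exact_mod_cast add_card_sdiff_le_card_sdiff hS hT
  have hTS : (T \ S).card * s ≤ ∑ i ∈ T \ S, g i := by
    simpa using card_nsmul_le_sum (T \ S) g s fun i hi => by
      rw [mem_sdiff] at hi
      exact hgf i hi.2 ▸ hfT i hi.1
  have hST : ∑ j ∈ S \ T, f j ≤ (S \ T).card * s := by
    simpa using sum_le_card_nsmul (S \ T) f s fun j hj => hfTc j (mem_sdiff.1 hj).2
  have htail : ∑ j ∈ Tᶜ, f j = ∑ j ∈ S \ T, f j + ∑ j ∈ Tᶜ \ S, g j := by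
    rw [← sum_inter_add_sum_sdiff Tᶜ S, inter_comm, ← sdiff_eq_inter_compl]
    congr 1
    exact sum_congr rfl fun j hj => (hgf j (mem_sdiff.1 hj).2).symm
  have hsplit : ∑ i ∈ T \ S, g i + ∑ i ∈ Tᶜ \ S, g i ≤ ∑ i, g i := by
    rw [← sum_union (disjoint_compl_right.mono sdiff_subset sdiff_subset)]
    exact sum_le_univ_sum_of_nonneg hg
  have := mul_le_mul_of_nonneg_right hcard hs
  linarith

/-- With `t` the smallest of the `|x_i|`, `i ∈ T`, the tail is flat enough that
`‖x_{Tᶜ}‖₂² ≤ t^{2-p} ‖x_{Tᶜ}‖_p^p`, while every `k`-sparse `z` leaves at least `k` entries of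
size `≥ t` in `x - z` on top of the tail, so `‖x - z‖_p^p ≥ k t^p + ‖x_{Tᶜ}‖_p^p`. -/
theorem rpow_mul_lpNorm_two_ite_le_sigmaK {p : ℝ} (hp0 : 0 < p) (hp2 : p ≤ 2) {k : ℕ}
    (hk : 0 < k) {T : Finset ι} (hT : 2 * k ≤ T.card) {x : ι → 𝕜}
    (hTmax : ∀ i ∈ T, ∀ j ∉ T, ‖x j‖ ≤ ‖x i‖) :
    (k : ℝ) ^ (1 / p - 1 / 2) * lpNorm 2 (fun i => if i ∈ T then 0 else x i) ≤
      sigmaK k p x := by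
  have hTne : T.Nonempty := card_pos.1 (by omega)
  set t := T.inf' hTne fun i => ‖x i‖
  have ht0 : 0 ≤ t := le_inf' hTne _ fun i _ => norm_nonneg _
  have hxT : ∀ i ∈ T, t ≤ ‖x i‖ := fun i hi => inf'_le _ hi
  have hxTc : ∀ j ∉ T, ‖x j‖ ≤ t := fun j hj => le_inf' hTne _ fun i hi => hTmax i hi j hj
  set tail := ∑ j ∈ Tᶜ, ‖x j‖ ^ p
  have htail : 0 ≤ tail := sum_nonneg fun j _ => rpow_nonneg (norm_nonneg _) _
  have hflat : ∑ j ∈ Tᶜ, ‖x j‖ ^ (2 : ℝ) ≤ t ^ (2 - p) * tail :=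
    sum_rpow_two_le_rpow_mul_sum_rpow hp2 (fun j _ => norm_nonneg _)
      fun j hj => hxTc j (mem_compl.1 hj)
  have hregroup : (k : ℝ) ^ (1 / p - 1 / 2) * (t ^ (2 - p) * tail) ^ (1 / 2 : ℝ) =
      (k * t ^ p) ^ (1 / p - 1 / 2) * tail ^ (1 / 2 : ℝ) := by
    have hexponent : (2 - p) * (1 / 2) = p * (1 / p - 1 / 2) := by field_simp
    rw [mul_rpow (by positivity) htail, mul_rpow (by positivity) (by positivity),
      ← rpow_mul ht0, ← rpow_mul ht0, hexponent, mul_assoc]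
  refine le_sigmaK fun z hz => ?_
  obtain ⟨S, hS, hzS⟩ := exists_finset_card_le_of_l0Norm_le hz
  have hsparse : k * t ^ p + tail ≤ ∑ i, ‖x i - z i‖ ^ p :=
    mul_add_sum_compl_le_sum hS hT (by positivity) (fun i => by positivity)
      (fun i hi => by rw [hzS i hi, sub_zero]) (fun i hi => by gcongr; exact hxT i hi)
      fun j hj => by gcongr; exact hxTc j hj
  calc (k : ℝ) ^ (1 / p - 1 / 2) * lpNorm 2 (fun i => if i ∈ T then 0 else x i)
      ≤ (k : ℝ) ^ (1 / p - 1 / 2) * (t ^ (2 - p) * tail) ^ (1 / 2 : ℝ) := by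
        rw [lpNorm_ite_mem_zero two_ne_zero]
        gcongr
    _ ≤ (k * t ^ p + tail) ^ (1 / p) := by
        rw [hregroup]
        exact rpow_mul_rpow_half_le_add_rpow (by positivity) htail hp0 hp2
    _ ≤ lpNorm p (fun i => x i - z i) := by
        unfold _root_.lpNorm
        gcongr

end

theorem stmt5_general {𝕜 : Type*} [RCLike 𝕜] (p : ℝ) (hp0 : 0 < p) (hp1 : p ≤ 1)
    (n k : ℕ) (hk : 0 < k) (x : Fin n → 𝕜)
    (T : Finset (Fin n)) (hT : T.card = 2 * k)
    (hTmax : ∀ i ∈ T, ∀ j ∉ T, ‖x j‖ ≤ ‖x i‖) :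
    lpNorm 2 (fun i => if i ∈ T then 0 else x i) ≤ sigmaK k p x / (k : ℝ) ^ (1 / p - 1 / 2) := by
  rw [le_div_iff₀ (by positivity), mul_comm]
  exact rpow_mul_lpNorm_two_ite_le_sigmaK hp0 (hp1.trans one_le_two) hk hT.ge hTmax

/-- inequality `key1`: if `T` is a set of `2k` indices of the `2k`
largest-magnitude entries of `x`, then `‖x_{T^c}‖₂ ≤ σ_k(x)_p / k^{1/p - 1/2}`. -/
theorem stmt5 {𝕜 : Type*} [RCLike 𝕜] (p : ℝ) (hp0 : 0 < p) (hp1 : p ≤ 1)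
    (n k : ℕ) (hk : 0 < k) (hkn : 2 * k ≤ n) (x : Fin n → 𝕜)
    (T : Finset (Fin n)) (hT : T.card = 2 * k)
    (hTmax : ∀ i ∈ T, ∀ j ∉ T, ‖x j‖ ≤ ‖x i‖) :
    lpNorm 2 (fun i => if i ∈ T then 0 else x i) ≤ sigmaK k p x / (k : ℝ) ^ (1 / p - 1 / 2) :=
  stmt5_general p hp0 hp1 n k hk x T hT hTmax
end

section
/- Let 𝔽 ∈ {ℝ, ℂ}, let p ∈ (0,1], let n be a positive integer, and let x, x♯ ∈ 𝔽^n satisfy ∑_{i=1}^n |x♯_i|^p ≤ ∑_{i=1}^n |x_i|^p. Let T ⊆ S ⊆ {1,…,n} be index sets and set h := x♯ − x_T. Then ∑_{i ∉ S} |h_i|^p ≤ ∑_{i ∈ S} |h_i|^p + ∑_{i ∉ T} |x_i|^p. -/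
open MeasureTheory ProbabilityTheory Real Finset

/-
Proof idea: write `μ_A(v) = ∑_{i ∈ A} |v_i|^p`. Off `S` (hence off `T`) `h = x♯`, and on `T` the
`p`-triangle inequality gives `|x_i|^p ≤ |x♯_i|^p + |h_i|^p`. Hence, using `T ⊆ S` twice,
`μ_{Sᶜ}(h) = μ(x♯) - μ_S(x♯) ≤ μ_T(x) + μ_{Tᶜ}(x) - μ_S(x♯) ≤ μ_T(h) + μ_{Tᶜ}(x) ≤ μ_S(h) + μ_{Tᶜ}(x)`.
-/

theorem norm_rpow_le_norm_rpow_add_norm_sub_rpow {E : Type*} [SeminormedAddCommGroup E]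
    {p : ℝ} (hp0 : 0 ≤ p) (hp1 : p ≤ 1) (a b : E) :
    ‖a‖ ^ p ≤ ‖b‖ ^ p + ‖b - a‖ ^ p :=
  calc ‖a‖ ^ p ≤ (‖b‖ + ‖b - a‖) ^ p :=
        Real.rpow_le_rpow (norm_nonneg a) (norm_le_norm_add_norm_sub b a) hp0
    _ ≤ ‖b‖ ^ p + ‖b - a‖ ^ p :=
        Real.rpow_add_le_add_rpow (norm_nonneg b) (norm_nonneg _) hp0 hp1

theorem sum_compl_le_sum_add_sum_compl_of_sum_le {ι : Type*} [Fintype ι] [DecidableEq ι]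
    {a b d : ι → ℝ} {T S : Finset ι} (hTS : T ⊆ S) (ha : ∀ i, 0 ≤ a i) (hd : ∀ i, 0 ≤ d i)
    (hab : ∑ i, a i ≤ ∑ i, b i) (hT : ∀ i ∈ T, b i ≤ a i + d i) (hS : ∀ i ∉ S, d i = a i) :
    ∑ i ∈ Sᶜ, d i ≤ ∑ i ∈ S, d i + ∑ i ∈ Tᶜ, b i := by
  have hd_compl : ∑ i ∈ Sᶜ, d i = ∑ i ∈ Sᶜ, a i :=
    sum_congr rfl fun i hi => hS i (mem_compl.mp hi)
  have hb_T : ∑ i ∈ T, b i ≤ ∑ i ∈ T, a i + ∑ i ∈ T, d i := by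
    rw [← sum_add_distrib]
    exact sum_le_sum hT
  have ha_mono : ∑ i ∈ T, a i ≤ ∑ i ∈ S, a i :=
    sum_le_sum_of_subset_of_nonneg hTS fun i _ _ => ha i
  have hd_mono : ∑ i ∈ T, d i ≤ ∑ i ∈ S, d i :=
    sum_le_sum_of_subset_of_nonneg hTS fun i _ _ => hd i
  rw [← sum_add_sum_compl S a, ← sum_add_sum_compl T b] at hab
  linarith

theorem stmt6_general {𝕜 : Type*} [RCLike 𝕜] (p : ℝ) (hp0 : 0 < p) (hp1 : p ≤ 1)
    (n : ℕ) (x xs : Fin n → 𝕜)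
    (hmin : ∑ i, ‖xs i‖ ^ p ≤ ∑ i, ‖x i‖ ^ p)
    (T S : Finset (Fin n)) (hTS : T ⊆ S) :
    ∑ i ∈ Sᶜ, ‖xs i - (if i ∈ T then x i else 0)‖ ^ p ≤
      ∑ i ∈ S, ‖xs i - (if i ∈ T then x i else 0)‖ ^ p + ∑ i ∈ Tᶜ, ‖x i‖ ^ p := by
  refine sum_compl_le_sum_add_sum_compl_of_sum_le hTS
    (fun i => Real.rpow_nonneg (norm_nonneg (xs i)) p)
    (fun i => Real.rpow_nonneg (norm_nonneg _) p) hmin (fun i hi => ?_) (fun i hi => ?_)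
  · simpa only [if_pos hi] using norm_rpow_le_norm_rpow_add_norm_sub_rpow hp0.le hp1 (x i) (xs i)
  · rw [if_neg fun hiT => hi (hTS hiT), sub_zero]

/-- inequality `temp_comb11`: if `‖x♯‖_p^p ≤ ‖x‖_p^p`, `T ⊆ S` and
`h := x♯ - x_T`, then `∑_{i ∉ S} |h_i|^p ≤ ∑_{i ∈ S} |h_i|^p + ∑_{i ∉ T} |x_i|^p`. -/
theorem stmt6 {𝕜 : Type*} [RCLike 𝕜] (p : ℝ) (hp0 : 0 < p) (hp1 : p ≤ 1)
    (n : ℕ) (hn : 0 < n) (x xs : Fin n → 𝕜)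
    (hmin : ∑ i, ‖xs i‖ ^ p ≤ ∑ i, ‖x i‖ ^ p)
    (T S : Finset (Fin n)) (hTS : T ⊆ S) :
    ∑ i ∈ Sᶜ, ‖xs i - (if i ∈ T then x i else 0)‖ ^ p ≤
      ∑ i ∈ S, ‖xs i - (if i ∈ T then x i else 0)‖ ^ p + ∑ i ∈ Tᶜ, ‖x i‖ ^ p :=
  stmt6_general p hp0 hp1 n x xs hmin T S hTS
end

section
/- Let 𝔽 ∈ {ℝ, ℂ}. For every constant c₀ > 0 there exists a constant γ > 0, depending only on c₀, with the following property: if m < n are positive integers, k ∈ {1,…,n}, A ∈ 𝔽^{m×n} is any matrix, and Δ : ℝ^m → 𝔽^n is any map satisfying dist(Δ(|Ax|), x) ≤ c₀·σ_k(x)₂ for all x ∈ 𝔽^n, then m ≥ γ·n. -/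
open MeasureTheory ProbabilityTheory Real Finset

/-!
If `Av = 0` then `|Av| = |A0|`, and `Δ(|A0|) = 0` because `σ_k(0)₂ = 0`; so instance optimality
gives `‖v‖ ≤ c₀ σ_k(v)₂ ≤ c₀ ‖v - vᵢ eᵢ‖` for every coordinate `i`, i.e.
`|vᵢ|² ≤ (1 - C⁻²) ‖v‖²` on `ker A`, where `C = max c₀ 1`. Testing this on `P eᵢ`, for `P` the
orthogonal projection onto `ker A`, gives `‖P eᵢ‖² ≤ 1 - C⁻²`; summing over `i` computes the trace
of `P`, so `n - m ≤ dim ker A ≤ (1 - C⁻²) n`, that is `m ≥ C⁻² n`.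
-/

open scoped InnerProductSpace Matrix
open WithLp Module

section Norms

variable {ι : Type*} [Fintype ι] {𝕜 : Type*} [RCLike 𝕜]

lemma lpNorm_nonneg (q : ℝ) (x : ι → 𝕜) : 0 ≤ lpNorm q x :=
  Real.rpow_nonneg (Finset.sum_nonneg fun _ _ => Real.rpow_nonneg (norm_nonneg _) _) _

lemma lpNorm_two_eq_norm (x : ι → 𝕜) : lpNorm 2 x = ‖toLp 2 x‖ := by
  rw [EuclideanSpace.norm_eq, Real.sqrt_eq_rpow, _root_.lpNorm]
  simp

lemma phaseDist_eq_of_forall {q r : ℝ} {x y : ι → 𝕜}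
    (h : ∀ c : 𝕜, ‖c‖ = 1 → lpNorm q (fun i => x i - c * y i) = r) : phaseDist q x y = r := by
  have hset : {d | ∃ c : 𝕜, ‖c‖ = 1 ∧ d = lpNorm q (fun i => x i - c * y i)} = {r} := by
    ext d
    constructor
    · rintro ⟨c, hc, rfl⟩
      exact h c hc
    · rintro rfl
      exact ⟨1, norm_one, (h 1 norm_one).symm⟩
  rw [phaseDist, hset, csInf_singleton]

lemma phaseDist_zero_right (q : ℝ) (x : ι → 𝕜) : phaseDist q x 0 = lpNorm q x :=
  phaseDist_eq_of_forall fun c _ => by simp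

lemma phaseDist_zero_left (q : ℝ) (y : ι → 𝕜) : phaseDist q 0 y = lpNorm q y :=
  phaseDist_eq_of_forall fun c hc => by simp [_root_.lpNorm, hc]

lemma l0Norm_single_le_one [DecidableEq ι] (i : ι) (a : 𝕜) : l0Norm (Pi.single i a) ≤ 1 := by
  refine Finset.card_le_one.mpr fun j hj j' hj' => ?_
  simp only [Finset.mem_filter, Finset.mem_univ, true_and, Pi.single_apply, ne_eq, ite_eq_right_iff,
    not_forall] at hj hj'
  rw [hj.1, hj'.1]

lemma sigmaK_le {k : ℕ} (q : ℝ) {z : ι → 𝕜} (hz : l0Norm z ≤ k) (x : ι → 𝕜) :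
    sigmaK k q x ≤ lpNorm q (fun i => x i - z i) :=
  csInf_le ⟨0, by rintro d ⟨z, -, rfl⟩; exact lpNorm_nonneg q _⟩ ⟨z, hz, rfl⟩

lemma sigmaK_nonneg (k : ℕ) (q : ℝ) (x : ι → 𝕜) : 0 ≤ sigmaK k q x :=
  le_csInf ⟨_, 0, by simp [l0Norm], rfl⟩ (by rintro d ⟨z, -, rfl⟩; exact lpNorm_nonneg q _)

lemma sigmaK_zero (k : ℕ) {q : ℝ} (hq : q ≠ 0) : sigmaK k q (0 : ι → 𝕜) = 0 :=
  le_antisymm ((sigmaK_le q (z := 0) (by simp [l0Norm]) 0).trans_eq (by simp [_root_.lpNorm, hq]))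
    (sigmaK_nonneg k q 0)

lemma sigmaK_two_sq_le {k : ℕ} (hk : 1 ≤ k) (x : ι → 𝕜) (i : ι) :
    sigmaK k 2 x ^ 2 ≤ ‖toLp 2 x‖ ^ 2 - ‖x i‖ ^ 2 := by
  classical
  have hσ := sigmaK_le 2 ((l0Norm_single_le_one i (x i)).trans hk) x
  have herase : ‖toLp 2 (fun j => x j - (Pi.single i (x i) : ι → 𝕜) j)‖ ^ 2 =
      ‖toLp 2 x‖ ^ 2 - ‖x i‖ ^ 2 := by
    simp only [EuclideanSpace.norm_sq_eq]
    rw [Fintype.sum_eq_add_sum_compl i, Fintype.sum_eq_add_sum_compl i (fun j => ‖x j‖ ^ 2)]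
    have hrest :
        ∑ j ∈ {i}ᶜ, ‖x j - (Pi.single i (x i) : ι → 𝕜) j‖ ^ 2 = ∑ j ∈ {i}ᶜ, ‖x j‖ ^ 2 :=
      Finset.sum_congr rfl fun j hj => by
        rw [Pi.single_eq_of_ne (by simpa using hj), sub_zero]
    simp [hrest]
  rw [lpNorm_two_eq_norm] at hσ
  rw [← herase]
  exact pow_le_pow_left₀ (sigmaK_nonneg k 2 x) hσ 2

end Norms

section Projection

variable {ι : Type*} [Fintype ι] {𝕜 : Type*} [RCLike 𝕜]
  {E : Type*} [NormedAddCommGroup E] [InnerProductSpace 𝕜 E]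

lemma re_inner_starProjection_self (K : Submodule 𝕜 E) [K.HasOrthogonalProjection] (x : E) :
    RCLike.re ⟪x, K.starProjection x⟫_𝕜 = ‖K.starProjection x‖ ^ 2 := by
  rw [← K.inner_starProjection_left_eq_right, K.re_inner_starProjection_eq_normSq,
    K.starProjection_apply, Submodule.norm_coe]

lemma finrank_eq_sum_norm_sq_starProjection [FiniteDimensional 𝕜 E] (e : OrthonormalBasis ι 𝕜 E)
    (K : Submodule 𝕜 E) :
    (finrank 𝕜 K : ℝ) = ∑ i, ‖K.starProjection (e i)‖ ^ 2 := by
  have htrace : LinearMap.trace 𝕜 E K.starProjection = finrank 𝕜 K := by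
    have hproj := LinearMap.IsIdempotentElem.isProj_range _
      (ContinuousLinearMap.IsIdempotentElem.toLinearMap K.isIdempotentElem_starProjection)
    rw [hproj.trace]
    exact congrArg (fun U : Submodule 𝕜 E => (finrank 𝕜 U : 𝕜)) K.range_starProjection
  have := congrArg RCLike.re htrace
  rw [LinearMap.trace_eq_sum_inner _ e, map_sum, RCLike.natCast_re] at this
  rw [← this]
  exact Finset.sum_congr rfl fun i _ => re_inner_starProjection_self K (e i)

theorem finrank_le_mul_card_of_norm_inner_sq_le [FiniteDimensional 𝕜 E]
    (e : OrthonormalBasis ι 𝕜 E) {K : Submodule 𝕜 E} {t : ℝ} (ht : 0 ≤ t)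
    (h : ∀ v ∈ K, ∀ i, ‖⟪e i, v⟫_𝕜‖ ^ 2 ≤ t * ‖v‖ ^ 2) :
    (finrank 𝕜 K : ℝ) ≤ t * Fintype.card ι := by
  rw [finrank_eq_sum_norm_sq_starProjection e K, mul_comm, ← nsmul_eq_mul, ← Finset.card_univ,
    ← Finset.sum_const]
  refine Finset.sum_le_sum fun i _ => ?_
  set p := ‖K.starProjection (e i)‖ ^ 2
  have hre : p ≤ ‖⟪e i, K.starProjection (e i)⟫_𝕜‖ :=
    (re_inner_starProjection_self K (e i)).symm.trans_le (RCLike.re_le_norm _)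
  have hsq : p ^ 2 ≤ t * p :=
    (pow_le_pow_left₀ (by positivity) hre 2).trans (h _ (K.starProjection_apply_mem _) i)
  rcases (show 0 ≤ p by positivity).eq_or_lt with hp | hp
  · rw [← hp]; exact ht
  · nlinarith

end Projection

def IsInstanceOptimal {m n : ℕ} {𝕜 : Type*} [RCLike 𝕜] (A : Fin m → Fin n → 𝕜)
    (Δ : (Fin m → ℝ) → Fin n → 𝕜) (k : ℕ) (c₀ : ℝ) : Prop :=
  ∀ x, phaseDist 2 (Δ (absMv A x)) x ≤ c₀ * sigmaK k 2 x

namespace IsInstanceOptimal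

variable {𝕜 : Type*} [RCLike 𝕜] {m n k : ℕ} {A : Fin m → Fin n → 𝕜}
  {Δ : (Fin m → ℝ) → Fin n → 𝕜} {c₀ : ℝ}

lemma apply_absMv_zero (hΔ : IsInstanceOptimal A Δ k c₀) : Δ (absMv A 0) = 0 := by
  have h := hΔ 0
  rw [phaseDist_zero_right, lpNorm_two_eq_norm, sigmaK_zero k two_ne_zero, mul_zero,
    norm_le_zero_iff, toLp_eq_zero] at h
  exact h

lemma norm_le_mul_sigmaK_of_mulVec_eq_zero (hΔ : IsInstanceOptimal A Δ k c₀) {v : Fin n → 𝕜}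
    (hv : Matrix.of A *ᵥ v = 0) : ‖toLp 2 v‖ ≤ c₀ * sigmaK k 2 v := by
  have hmeas : absMv A v = absMv A 0 := by
    funext r
    simpa [absMv, Matrix.mulVec, dotProduct] using congrArg norm (congrFun hv r)
  simpa [hmeas, hΔ.apply_absMv_zero, phaseDist_zero_left, lpNorm_two_eq_norm] using hΔ v

lemma norm_sq_apply_le_of_mulVec_eq_zero (hΔ : IsInstanceOptimal A Δ k c₀) (hk : 1 ≤ k)
    {v : Fin n → 𝕜} (hv : Matrix.of A *ᵥ v = 0) (i : Fin n) :
    ‖v i‖ ^ 2 ≤ (1 - (max c₀ 1 ^ 2)⁻¹) * ‖toLp 2 v‖ ^ 2 := by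
  set C := max c₀ 1
  have hC : 0 < C := lt_of_lt_of_le one_pos (le_max_right _ _)
  have hnorm : ‖toLp 2 v‖ ≤ C * sigmaK k 2 v :=
    (hΔ.norm_le_mul_sigmaK_of_mulVec_eq_zero hv).trans
      (mul_le_mul_of_nonneg_right (le_max_left _ _) (sigmaK_nonneg k 2 v))
  have hsq : ‖toLp 2 v‖ ^ 2 ≤ C ^ 2 * (‖toLp 2 v‖ ^ 2 - ‖v i‖ ^ 2) :=
    calc ‖toLp 2 v‖ ^ 2 ≤ C ^ 2 * sigmaK k 2 v ^ 2 := by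
          rw [← mul_pow]; exact pow_le_pow_left₀ (norm_nonneg _) hnorm 2
      _ ≤ C ^ 2 * (‖toLp 2 v‖ ^ 2 - ‖v i‖ ^ 2) := by gcongr; exact sigmaK_two_sq_le hk v i
  rw [sub_mul, one_mul, inv_mul_eq_div, le_sub_iff_add_le, ← le_sub_iff_add_le',
    div_le_iff₀ (by positivity)]
  linarith

end IsInstanceOptimal

theorem stmt11_general {𝕜 : Type*} [RCLike 𝕜] (c₀ : ℝ) :
    ∃ γ : ℝ, 0 < γ ∧
      ∀ m n k : ℕ, 0 < m → m < n → 1 ≤ k → k ≤ n →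
        ∀ (A : Fin m → Fin n → 𝕜) (Δ : (Fin m → ℝ) → (Fin n → 𝕜)),
          (∀ x : Fin n → 𝕜, phaseDist 2 (Δ (absMv A x)) x ≤ c₀ * sigmaK k 2 x) →
          γ * n ≤ m := by
  set t := 1 - (max c₀ 1 ^ 2)⁻¹
  have ht : 0 ≤ t := sub_nonneg.mpr (inv_le_one_of_one_le₀ (one_le_pow₀ (le_max_right _ _)))
  refine ⟨(max c₀ 1 ^ 2)⁻¹, by positivity, fun m n k _ _ hk _ A Δ hΔ => ?_⟩
  set f := Matrix.toLpLin 2 2 (Matrix.of A)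
  have hker : (finrank 𝕜 (LinearMap.ker f) : ℝ) ≤ t * n := by
    simpa using finrank_le_mul_card_of_norm_inner_sq_le (EuclideanSpace.basisFun (Fin n) 𝕜) ht
      fun v hv i => by
        rw [LinearMap.mem_ker, Matrix.toLpLin_apply, toLp_eq_zero] at hv
        rw [EuclideanSpace.basisFun_inner]
        exact IsInstanceOptimal.norm_sq_apply_le_of_mulVec_eq_zero hΔ hk hv i
  have hrank : n ≤ finrank 𝕜 (LinearMap.ker f) + m := by
    have hrange : finrank 𝕜 (LinearMap.range f) ≤ m := by
      simpa using (LinearMap.range f).finrank_le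
    have := f.finrank_range_add_finrank_ker
    rw [finrank_euclideanSpace_fin] at this
    omega
  have : (n : ℝ) ≤ finrank 𝕜 (LinearMap.ker f) + m := by exact_mod_cast hrank
  linarith

/-- Proposition `thm:bad_22`: if a decoder `Δ` achieves uniform
`(2,2)`-instance optimality `dist(Δ(|Ax|), x) ≤ c₀·σ_k(x)₂` for all `x ∈ 𝔽^n` with `m < n`,
then `m ≥ γ·n` for a constant `γ > 0` depending only on `c₀`. -/
theorem stmt11 {𝕜 : Type*} [RCLike 𝕜] (c₀ : ℝ) (hc₀ : 0 < c₀) :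
    ∃ γ : ℝ, 0 < γ ∧
      ∀ m n k : ℕ, 0 < m → m < n → 1 ≤ k → k ≤ n →
        ∀ (A : Fin m → Fin n → 𝕜) (Δ : (Fin m → ℝ) → (Fin n → 𝕜)),
          (∀ x : Fin n → 𝕜, phaseDist 2 (Δ (absMv A x)) x ≤ c₀ * sigmaK k 2 x) →
          γ * n ≤ m :=
  stmt11_general c₀
end

section
/- Let C ≥ 1 be a real number and let m, n be positive integers with n ≥ (log 6)²·m. Suppose there exists an integer s with 1 ≤ s ≤ e·n/(16·C²) and C·s·log(e·n/s) ≤ m, and let k₀ be the largest such integer. Then m ≤ 20·C²·k₀·log(e·n/m). -/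
open Real

/-!
If `k₀ + 1` still satisfies `k₀ + 1 ≤ e n / (16 C²)`, maximality says that it violates
`C s log(e n / s) ≤ m`, i.e. `m < C s t` with `t = log(e n / s) ≥ log(16 C²)`. Taking logarithms of
`e n / m > (e n / s) / (C t)` gives `log(e n / m) > t - log C - log t ≥ t / 10`, since
`log C ≤ t / 2 - 2 log 2` and `log t ≤ t / e`. Otherwise `e n < 16 C² (k₀ + 1) ≤ 32 C² k₀`, and
`m ≤ n` already gives the bound because `log(e n / m) ≥ 1`.
-/

namespace Real

lemma log_le_div_exp_one {t : ℝ} (ht : 0 < t) : log t ≤ t / exp 1 := by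
  have h := log_le_sub_one_of_pos (div_pos ht (exp_pos 1))
  rw [log_div ht.ne' (exp_pos 1).ne', log_exp] at h
  linarith

lemma log_lt_ten_mul_log_of_div_lt {C x y : ℝ} (hC : 1 ≤ C) (hx : 16 * C ^ 2 ≤ x)
    (hy : x / (C * log x) < y) : log x < 10 * log y := by
  have hC0 : 0 < C := by linarith
  have h16 : log 16 = 4 * log 2 := by
    rw [show (16 : ℝ) = 2 ^ 4 by norm_num, log_pow]; norm_num
  have hlog2 : 0.69 < log 2 := by have := log_two_gt_d9; linarith
  have hlogx : log 16 + 2 * log C ≤ log x := by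
    calc log 16 + 2 * log C = log (16 * C ^ 2) := by
          rw [log_mul (by norm_num) (by positivity), log_pow]; norm_num
      _ ≤ log x := log_le_log (by positivity) hx
  have hlogC : 0 ≤ log C := log_nonneg hC
  have ht : 0 < log x := by linarith
  have hloglog : log (log x) ≤ 2 * log x / 5 := by
    have he : 2.7 < exp 1 := by have := exp_one_gt_d9; linarith
    calc log (log x) ≤ log x / exp 1 := log_le_div_exp_one ht
      _ ≤ 2 * log x / 5 := by
        rw [div_le_div_iff₀ (exp_pos 1) (by norm_num)]; nlinarith
  have hx0 : 0 < x := lt_of_lt_of_le (by positivity) hx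
  have hlogy : log x - (log C + log (log x)) < log y := by
    have h := log_lt_log (by positivity) hy
    rwa [log_div hx0.ne' (by positivity), log_mul hC0.ne' ht.ne'] at h
  linarith

lemma lt_ten_mul_log_div_of_lt_mul_log_div {C a s m : ℝ} (hC : 1 ≤ C) (hs : 0 < s) (hm : 0 < m)
    (hsa : 16 * C ^ 2 ≤ a / s) (hms : m < C * s * log (a / s)) :
    m < 10 * C * s * log (a / m) := by
  have hC0 : 0 < C := by linarith
  have ha : 0 < a := (div_pos_iff_of_pos_right hs).mp (lt_of_lt_of_le (by positivity) hsa)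
  have ht : 0 < log (a / s) := by
    by_contra! h
    nlinarith [mul_pos hC0 hs]
  have hdiv : a / s / (C * log (a / s)) < a / m := by
    rw [div_div, ← mul_assoc, mul_comm s C]
    exact div_lt_div_of_pos_left ha hm hms
  calc m < C * s * log (a / s) := hms
    _ ≤ C * s * (10 * log (a / m)) := by
        gcongr; exact (log_lt_ten_mul_log_of_div_lt hC hsa hdiv).le
    _ = 10 * C * s * log (a / m) := by ring

lemma one_le_log_exp_one_mul_div {m n : ℝ} (hm : 0 < m) (hmn : m ≤ n) :
    1 ≤ log (exp 1 * n / m) := by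
  rw [le_log_iff_exp_le (div_pos (mul_pos (exp_pos 1) (hm.trans_le hmn)) hm), le_div_iff₀ hm]
  exact mul_le_mul_of_nonneg_left hmn (exp_pos 1).le

lemma le_twenty_mul_of_exp_one_mul_lt {C k m n : ℝ} (hk : 1 ≤ k) (hmn : m ≤ n)
    (h : exp 1 * n < 16 * C ^ 2 * (k + 1)) : m ≤ 20 * C ^ 2 * k := by
  have he : 2.7 < exp 1 := by have := exp_one_gt_d9; linarith
  nlinarith [mul_nonneg (sub_nonneg.2 hk) (sq_nonneg C), sq_nonneg C]

end Real

theorem stmt17_general (C : ℝ) (hC : 1 ≤ C) (m n : ℕ) (hm : 0 < m)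
    (hnm : (Real.log 6) ^ 2 * m ≤ n) (k₀ : ℕ)
    (hk₀1 : 1 ≤ k₀)
    (hk₀max : ∀ s : ℕ, 1 ≤ s → (s : ℝ) ≤ Real.exp 1 * n / (16 * C ^ 2) →
      C * s * Real.log (Real.exp 1 * n / s) ≤ m → s ≤ k₀) :
    (m : ℝ) ≤ 20 * C ^ 2 * k₀ * Real.log (Real.exp 1 * n / m) := by
  have hm0 : (0 : ℝ) < m := by exact_mod_cast hm
  have hk : (1 : ℝ) ≤ k₀ := by exact_mod_cast hk₀1
  have hmn : (m : ℝ) ≤ n := by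
    have : 1 ≤ log 6 := by
      rw [le_log_iff_exp_le (by norm_num)]; linarith [exp_one_lt_d9]
    calc (m : ℝ) = 1 * m := (one_mul _).symm
      _ ≤ log 6 ^ 2 * m := by gcongr; exact one_le_pow₀ this
      _ ≤ n := hnm
  have hL := one_le_log_exp_one_mul_div hm0 hmn
  by_cases hroom : ((k₀ + 1 : ℕ) : ℝ) ≤ exp 1 * n / (16 * C ^ 2)
  · have hfail : (m : ℝ) < C * ((k₀ + 1 : ℕ) : ℝ) * log (exp 1 * n / ((k₀ + 1 : ℕ) : ℝ)) := by
      by_contra! h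
      have := hk₀max (k₀ + 1) (by omega) hroom h
      omega
    have hsa : 16 * C ^ 2 ≤ exp 1 * n / ((k₀ + 1 : ℕ) : ℝ) := by
      rwa [le_div_iff₀ (by positivity), mul_comm, ← le_div_iff₀ (by positivity)]
    have hten := lt_ten_mul_log_div_of_lt_mul_log_div hC (by positivity) hm0 hsa hfail
    push_cast at hten
    have hcoef : 10 * C * (k₀ + 1) ≤ 20 * C ^ 2 * k₀ := by
      nlinarith [mul_le_mul hC hk zero_le_one (by linarith : (0 : ℝ) ≤ C)]
    calc (m : ℝ) ≤ 10 * C * (k₀ + 1) * log (exp 1 * n / m) := hten.le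
      _ ≤ 20 * C ^ 2 * k₀ * log (exp 1 * n / m) := by gcongr
  · rw [not_le, div_lt_iff₀ (by positivity)] at hroom
    push_cast at hroom
    calc (m : ℝ) ≤ 20 * C ^ 2 * k₀ * 1 := by
          rw [mul_one]; exact le_twenty_mul_of_exp_one_mul_lt hk hmn (by linarith)
      _ ≤ 20 * C ^ 2 * k₀ * log (exp 1 * n / m) := by gcongr

/-- inequality `eqn: k_0`: let `C ≥ 1`, `n ≥ (log 6)²·m`, and let `k₀` be the
largest integer `s` with `1 ≤ s ≤ e·n/(16C²)` and `C·s·log(e·n/s) ≤ m`. Then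
`m ≤ 20·C²·k₀·log(e·n/m)`. -/
theorem stmt17 (C : ℝ) (hC : 1 ≤ C) (m n : ℕ) (hm : 0 < m) (hn : 0 < n)
    (hnm : (Real.log 6) ^ 2 * m ≤ n) (k₀ : ℕ)
    (hk₀1 : 1 ≤ k₀)
    (hk₀2 : (k₀ : ℝ) ≤ Real.exp 1 * n / (16 * C ^ 2))
    (hk₀3 : C * k₀ * Real.log (Real.exp 1 * n / k₀) ≤ m)
    (hk₀max : ∀ s : ℕ, 1 ≤ s → (s : ℝ) ≤ Real.exp 1 * n / (16 * C ^ 2) →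
      C * s * Real.log (Real.exp 1 * n / s) ≤ m → s ≤ k₀) :
    (m : ℝ) ≤ 20 * C ^ 2 * k₀ * Real.log (Real.exp 1 * n / m) :=
  stmt17_general C hC m n hm hnm k₀ hk₀1 hk₀max
end

section
/- There exist universal constants c̃₀ > 0 and c̃₁ > 0 such that the following holds for all positive integers m ≤ n and every fixed z ∈ ℝ^n. If A ∈ ℝ^{m×n} is a standard Gaussian random matrix, then with probability at least 1 − 2·exp(−c̃₀·m) − 2m·exp(−c̃₁·m/log(en/m)), both (1/√m)·‖Az‖₂ ≤ √(3/2)·‖z‖₂ and (1/√m)·‖Az‖_∞ ≤ ‖z‖₂/√(log(en/m)) hold. -/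
open MeasureTheory ProbabilityTheory Real Finset

/-- The law of a standard Gaussian random matrix `A ∈ ℝ^{m×n}`: the product over the `m·n`
entries of the real Gaussian measure with mean `0` and variance `1`. -/
noncomputable def gaussMatrixReal (m n : ℕ) : Measure (Fin m → Fin n → ℝ) :=
  Measure.pi fun _ : Fin m => Measure.pi fun _ : Fin n => gaussianReal 0 1

/-!
The `i`-th coordinate `∑ⱼ A i j z j` of `Az` is a centred Gaussian of variance `‖z‖₂²`
(computed with characteristic functions), and the rows of `A` are independent, so `Az` has the
law of `‖z‖₂ • g` for a standard Gaussian vector `g ∈ ℝ^m`. For `g`, Chernoff's bound with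
`𝔼 exp(‖g‖₂² / 4) = 2^{m/2}` gives `ℙ(‖g‖₂² ≥ 3m/2) ≤ exp(-(3/8 - log 2 / 2) m)`, and the
Gaussian tail `ℙ(|gᵢ| ≥ τ) ≤ 2 exp(-τ²/2)` with a union bound over the `m` coordinates, at
`τ² = m / log(en/m)`, gives the second failure probability `2m exp(-m / (2 log(en/m)))`.
-/

section StdGaussianPi

variable {ι : Type*} [Fintype ι]

lemma map_sum_mul_pi_gaussianReal (z : ι → ℝ) :
    (Measure.pi fun _ : ι => gaussianReal 0 1).map (fun x => ∑ i, x i * z i)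
      = gaussianReal 0 (∑ i, z i ^ 2).toNNReal := by
  have hsum : (fun x : ι → ℝ => ∑ i, x i * z i) = (fun p => ∑ i, p i) ∘ (fun x i => x i * z i) :=
    rfl
  rw [hsum, ← Measure.map_map (by fun_prop) (by fun_prop),
    Measure.pi_map_pi fun _ => (measurable_mul_const _).aemeasurable]
  refine Measure.ext_of_charFun ?_
  ext t
  simp only [gaussianReal_map_mul_const, mul_zero]
  rw [charFun_map_sum_pi_eq_prod]
  simp only [Finset.prod_apply, charFun_gaussianReal, ← Complex.exp_sum]
  congr 1
  simp [Real.coe_toNNReal _ (by positivity : (0 : ℝ) ≤ ∑ i, z i ^ 2), sum_div, sum_mul]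

lemma hasSubgaussianMGF_id_gaussianReal : HasSubgaussianMGF id 1 (gaussianReal 0 1) :=
  ⟨integrable_exp_mul_gaussianReal, fun t => by simp [mgf_id_gaussianReal]⟩

lemma integral_exp_sq_div_four_gaussianReal :
    ∫ y, exp (y ^ 2 / 4) ∂(gaussianReal 0 1) = √2 := by
  have hdensity (y : ℝ) : gaussianPDFReal 0 1 y • exp (y ^ 2 / 4)
      = (√(2 * π))⁻¹ * exp (-(1 / 4) * y ^ 2) := by
    rw [gaussianPDFReal, smul_eq_mul, mul_assoc, ← exp_add]
    simp only [NNReal.coe_one, mul_one, sub_zero]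
    ring_nf
  rw [integral_gaussianReal_eq_integral_smul one_ne_zero]
  simp_rw [hdensity]
  rw [integral_const_mul, integral_gaussian, div_div_eq_mul_div, ← sqrt_inv,
    ← sqrt_mul (by positivity)]
  congr 1
  field_simp
  norm_num

lemma mgf_sum_sq_pi_gaussianReal :
    mgf (fun y : ι → ℝ => ∑ i, y i ^ 2) (Measure.pi fun _ : ι => gaussianReal 0 1) (1 / 4)
      = √2 ^ Fintype.card ι := by
  have hprod (y : ι → ℝ) : exp (1 / 4 * ∑ i, y i ^ 2) = ∏ i, exp (y i ^ 2 / 4) := by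
    rw [← exp_sum, mul_sum]
    ring_nf
  simp_rw [mgf, hprod]
  rw [integral_fintype_prod_eq_pow (fun y => exp (y ^ 2 / 4)),
    integral_exp_sq_div_four_gaussianReal]

lemma measureReal_le_sum_sq_pi_gaussianReal (t : ℝ) :
    (Measure.pi fun _ : ι => gaussianReal 0 1).real {y | t ≤ ∑ i, y i ^ 2}
      ≤ √2 ^ Fintype.card ι * exp (-t / 4) := by
  have hint : Integrable (fun y : ι → ℝ => exp (1 / 4 * ∑ i, y i ^ 2))
      (Measure.pi fun _ : ι => gaussianReal 0 1) := by
    refine Integrable.of_integral_ne_zero ?_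
    rw [← mgf, mgf_sum_sq_pi_gaussianReal]
    positivity
  calc _ ≤ exp (-(1 / 4) * t) * √2 ^ Fintype.card ι := by
        rw [← mgf_sum_sq_pi_gaussianReal]
        exact measure_ge_le_exp_mul_mgf t (by norm_num) hint
    _ = _ := by ring_nf

lemma measureReal_le_abs_gaussianReal {τ : ℝ} (hτ : 0 ≤ τ) :
    (gaussianReal 0 1).real {y | τ ≤ |y|} ≤ 2 * exp (-τ ^ 2 / 2) := by
  have hsplit : {y : ℝ | τ ≤ |y|} = {y | τ ≤ id y} ∪ {y | τ ≤ (-id) y} := by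
    ext y
    simp [le_abs]
  have h := hasSubgaussianMGF_id_gaussianReal
  calc _ ≤ _ := hsplit ▸ measureReal_union_le _ _
    _ ≤ exp (-τ ^ 2 / (2 * 1)) + exp (-τ ^ 2 / (2 * 1)) := by
        exact_mod_cast add_le_add (h.measure_ge_le hτ) (h.neg.measure_ge_le hτ)
    _ = _ := by ring_nf

lemma measureReal_exists_le_abs_pi_gaussianReal {τ : ℝ} (hτ : 0 ≤ τ) :
    (Measure.pi fun _ : ι => gaussianReal 0 1).real {y | ∃ i, τ ≤ |y i|}
      ≤ Fintype.card ι * (2 * exp (-τ ^ 2 / 2)) := by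
  have hunion : {y : ι → ℝ | ∃ i, τ ≤ |y i|} = ⋃ i, Function.eval i ⁻¹' {y | τ ≤ |y|} := by
    ext y
    simp
  have hmarginal (i : ι) : (Measure.pi fun _ : ι => gaussianReal 0 1).real
      (Function.eval i ⁻¹' {y | τ ≤ |y|}) = (gaussianReal 0 1).real {y | τ ≤ |y|} :=
    (measurePreserving_eval _ i).measureReal_preimage
      (measurableSet_le measurable_const measurable_abs).nullMeasurableSet
  calc _ ≤ ∑ i, (Measure.pi fun _ : ι => gaussianReal 0 1).real
        (Function.eval i ⁻¹' {y | τ ≤ |y|}) := hunion ▸ measureReal_iUnion_fintype_le _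
    _ ≤ ∑ _i : ι, 2 * exp (-τ ^ 2 / 2) := by
        simp_rw [hmarginal]
        exact sum_le_sum fun _ _ => measureReal_le_abs_gaussianReal hτ
    _ = _ := by simp

lemma one_sub_le_measureReal_pi_gaussianReal (t : ℝ) {τ : ℝ} (hτ : 0 ≤ τ) :
    1 - √2 ^ Fintype.card ι * exp (-t / 4) - Fintype.card ι * (2 * exp (-τ ^ 2 / 2))
      ≤ (Measure.pi fun _ : ι => gaussianReal 0 1).real
          {y | ∑ i, y i ^ 2 < t ∧ ∀ i, |y i| < τ} := by
  set μ := Measure.pi fun _ : ι => gaussianReal 0 1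
  set G := {y : ι → ℝ | ∑ i, y i ^ 2 < t ∧ ∀ i, |y i| < τ}
  have hcompl : Gᶜ ⊆ {y | t ≤ ∑ i, y i ^ 2} ∪ {y | ∃ i, τ ≤ |y i|} := by
    intro y hy
    simp only [G, Set.mem_compl_iff, Set.mem_ofPred_eq, not_and_or, not_lt, not_forall] at hy
    exact hy
  have hbad : μ.real Gᶜ
      ≤ √2 ^ Fintype.card ι * exp (-t / 4) + Fintype.card ι * (2 * exp (-τ ^ 2 / 2)) :=
    (measureReal_mono hcompl).trans <| (measureReal_union_le _ _).trans <|
      add_le_add (measureReal_le_sum_sq_pi_gaussianReal t)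
        (measureReal_exists_le_abs_pi_gaussianReal hτ)
  have hcover : 1 ≤ μ.real G + μ.real Gᶜ := by
    simpa using measureReal_union_le (μ := μ) G Gᶜ
  linarith

end StdGaussianPi

lemma lpNorm_two_eq_sqrt {ι : Type*} [Fintype ι] (y : ι → ℝ) :
    lpNorm 2 y = √(∑ i, y i ^ 2) := by
  rw [_root_.lpNorm, sqrt_eq_rpow]
  congr 1
  refine sum_congr rfl fun i _ => ?_
  rw [Real.norm_eq_abs, ← sq_abs, ← rpow_natCast]
  norm_num

lemma map_gaussMatrixReal_mulVec {m n : ℕ} (z : Fin n → ℝ) :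
    (gaussMatrixReal m n).map (fun A i => ∑ j, A i j * z j)
      = (Measure.pi fun _ : Fin m => gaussianReal 0 1).map (fun y i => lpNorm 2 z * y i) := by
  rw [gaussMatrixReal, Measure.pi_map_pi (f := fun (_ : Fin m) (x : Fin n → ℝ) => ∑ j, x j * z j)
      fun _ => (Finset.measurable_sum _ fun j _ => by fun_prop).aemeasurable,
    Measure.pi_map_pi (f := fun (_ : Fin m) (y : ℝ) => lpNorm 2 z * y) fun _ => by fun_prop,
    map_sum_mul_pi_gaussianReal, gaussianReal_map_const_mul, lpNorm_two_eq_sqrt, mul_zero, mul_one]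
  refine congrArg Measure.pi (funext fun _ => congrArg (gaussianReal 0) ?_)
  have hV : 0 ≤ ∑ j, z j ^ 2 := by positivity
  ext
  simp [hV, sq_sqrt hV]

lemma measurableSet_mul_lpNorm_two_le_and_mul_iSup_abs_le {m : ℕ} (a b c d : ℝ) :
    MeasurableSet {w : Fin m → ℝ | a * lpNorm 2 w ≤ b ∧ c * (⨆ i, |w i|) ≤ d} := by
  simp only [lpNorm_two_eq_sqrt]
  have h₁ : Measurable fun w : Fin m → ℝ => a * √(∑ i, w i ^ 2) := by fun_prop
  have h₂ : Measurable fun w : Fin m → ℝ => c * ⨆ i, |w i| :=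
    (Measurable.iSup fun i => (measurable_pi_apply i).abs).const_mul c
  exact (measurableSet_le h₁ measurable_const).inter (measurableSet_le h₂ measurable_const)

lemma mul_lpNorm_two_le_and_mul_iSup_abs_le {m : ℕ} {a s L : ℝ} (hs : 0 ≤ s) {y : Fin m → ℝ}
    (hsq : ∑ i, y i ^ 2 < a * m) (habs : ∀ i, |y i| < √m / √L) :
    1 / √m * lpNorm 2 (fun i => s * y i) ≤ √a * s ∧
      1 / √m * (⨆ i, |s * y i|) ≤ s / √L := by
  have hm : 1 / √m * √m ≤ 1 := by
    rw [one_div_mul_eq_div]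
    exact div_self_le_one _
  constructor
  · have hnorm : lpNorm 2 (fun i => s * y i) ≤ √a * s * √m := by
      rw [lpNorm_two_eq_sqrt]
      simp_rw [mul_pow, ← mul_sum]
      rw [sqrt_mul (by positivity), sqrt_sq hs, mul_comm √a, mul_assoc, ← sqrt_mul' _ m.cast_nonneg]
      gcongr
    calc _ ≤ 1 / √m * (√a * s * √m) := by gcongr
      _ = √a * s * (1 / √m * √m) := by ring
      _ ≤ √a * s := mul_le_of_le_one_right (by positivity) hm
  · have hsup : (⨆ i, |s * y i|) ≤ s * (√m / √L) :=
      Real.iSup_le (fun i => by rw [abs_mul, abs_of_nonneg hs]; gcongr; exact (habs i).le)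
        (by positivity)
    calc _ ≤ 1 / √m * (s * (√m / √L)) := by gcongr
      _ = s / √L * (1 / √m * √m) := by ring
      _ ≤ s / √L := mul_le_of_le_one_right (by positivity) hm

lemma gaussMatrixReal_preimage_mulVec {m n : ℕ} (z : Fin n → ℝ) {T : Set (Fin m → ℝ)}
    (hT : MeasurableSet T) :
    gaussMatrixReal m n ((fun A i => ∑ j, A i j * z j) ⁻¹' T)
      = Measure.pi (fun _ : Fin m => gaussianReal 0 1) ((fun y i => lpNorm 2 z * y i) ⁻¹' T) := by
  have hmeas : Measurable fun (A : Fin m → Fin n → ℝ) i => ∑ j, A i j * z j :=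
    measurable_pi_lambda _ fun i => Finset.measurable_sum _ fun j _ => by fun_prop
  rw [← Measure.map_apply hmeas hT, map_gaussMatrixReal_mulVec, Measure.map_apply (by fun_prop) hT]

lemma one_lt_exp_one_mul_div {m n : ℕ} (hm : 0 < m) (hmn : m ≤ n) : 1 < exp 1 * n / m := by
  have hnm : (1 : ℝ) ≤ n / m := (one_le_div (by positivity)).2 (by exact_mod_cast hmn)
  rw [mul_div_assoc]
  nlinarith [exp_one_gt_d9]

lemma one_sub_le_measureReal_pi_gaussianReal_fin (m : ℕ) {L : ℝ} (hL : 0 < L) :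
    1 - 2 * exp (-(3 / 8 - log 2 / 2) * m) - 2 * m * exp (-(1 / 2) * m / L)
      ≤ (Measure.pi fun _ : Fin m => gaussianReal 0 1).real
          {y | ∑ i, y i ^ 2 < 3 / 2 * m ∧ ∀ i, |y i| < √m / √L} := by
  refine le_trans ?_ (one_sub_le_measureReal_pi_gaussianReal _ (by positivity))
  have hchi : √2 ^ m * exp (-(3 / 2 * m) / 4) = exp (-(3 / 8 - log 2 / 2) * m) := by
    rw [← exp_log (by positivity : (0 : ℝ) < √2), ← exp_nat_mul, ← exp_add,
      log_sqrt (by norm_num)]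
    ring_nf
  have hτ : -(√m / √L) ^ 2 / 2 = -(1 / 2) * m / L := by
    rw [div_pow, sq_sqrt (by positivity), sq_sqrt hL.le]
    ring
  rw [Fintype.card_fin, hchi, hτ]
  linarith [exp_pos (-(3 / 8 - log 2 / 2) * m)]

/-- Lemma `Gaussian_LQ`: for a fixed `z ∈ ℝ^n` and a standard Gaussian random
matrix `A ∈ ℝ^{m×n}`, with probability at least
`1 - 2exp(-c̃₀ m) - 2m·exp(-c̃₁ m/log(en/m))`, one has
`(1/√m)‖Az‖₂ ≤ √(3/2)·‖z‖₂` and `(1/√m)‖Az‖_∞ ≤ ‖z‖₂/√(log(en/m))`. -/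
theorem stmt18 :
    ∃ c₀ c₁ : ℝ, 0 < c₀ ∧ 0 < c₁ ∧
      ∀ m n : ℕ, 0 < m → m ≤ n →
        ∀ z : Fin n → ℝ,
          ENNReal.ofReal (1 - 2 * Real.exp (-c₀ * m)
              - 2 * m * Real.exp (-c₁ * m / Real.log (Real.exp 1 * n / m))) ≤
            gaussMatrixReal m n
              {A : Fin m → Fin n → ℝ |
                (1 / Real.sqrt m) * lpNorm 2 (fun i => ∑ j, A i j * z j)
                    ≤ Real.sqrt (3 / 2) * lpNorm 2 z ∧
                (1 / Real.sqrt m) * (⨆ i : Fin m, |∑ j, A i j * z j|)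
                    ≤ lpNorm 2 z / Real.sqrt (Real.log (Real.exp 1 * n / m))} := by
  refine ⟨3 / 8 - log 2 / 2, 1 / 2, by linarith [log_two_lt_d9], by norm_num,
    fun m n hm hmn z => ?_⟩
  set L := log (exp 1 * n / m)
  have hL : 0 < L := log_pos (one_lt_exp_one_mul_div hm hmn)
  have hz : 0 ≤ lpNorm 2 z := by rw [lpNorm_two_eq_sqrt]; positivity
  set T := {w : Fin m → ℝ | 1 / √m * lpNorm 2 w ≤ √(3 / 2) * lpNorm 2 z ∧
    1 / √m * (⨆ i, |w i|) ≤ lpNorm 2 z / √L}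
  calc _ ≤ ENNReal.ofReal ((Measure.pi fun _ : Fin m => gaussianReal 0 1).real
          {y | ∑ i, y i ^ 2 < 3 / 2 * m ∧ ∀ i, |y i| < √m / √L}) :=
        ENNReal.ofReal_le_ofReal (one_sub_le_measureReal_pi_gaussianReal_fin m hL)
    _ = Measure.pi (fun _ : Fin m => gaussianReal 0 1)
          {y | ∑ i, y i ^ 2 < 3 / 2 * m ∧ ∀ i, |y i| < √m / √L} := ofReal_measureReal
    _ ≤ Measure.pi (fun _ : Fin m => gaussianReal 0 1) ((fun y i => lpNorm 2 z * y i) ⁻¹' T) :=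
        measure_mono fun y hy => mul_lpNorm_two_le_and_mul_iSup_abs_le hz hy.1 hy.2
    _ = gaussMatrixReal m n ((fun A i => ∑ j, A i j * z j) ⁻¹' T) :=
        (gaussMatrixReal_preimage_mulVec z
          (measurableSet_mul_lpNorm_two_le_and_mul_iSup_abs_le _ _ _ _)).symm
end
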